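/- For every integer m ≥ 1 and nonnegative real weights α_0,…,α_m with Σ_{i=0}^m α_i = 1, there exists a binary tree with m+1 leaves whose alphabetic cost satisfies C ≤ H(α_0,…,α_m) + 2 − (m+3)·α_min, where α_min = min{α_0,…,α_m}. -/

import Mathlib

/-!
Cut the weights where their prefix sums cross half the total, put the two sides under a root and
recurse. A root over sides of masses `a` and `b` adds `a + b` to the cost, while by the grouping
rule of entropy it adds `a·log₂((a+b)/a) + b·log₂((a+b)/b) ≥ 2·min(a, b)` to the bound; the
balanced cut makes the shortfall `|a - b|` at most the weight next to the cut on the heavier side.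

The induction keeps the first and last weights in the bound:
`cost + n·α_min + first + last ≤ S·H + 2S` for `n ≥ 2` weights of total `S`, while a single
leaf meets it only up to `α_min`. At a cut the two weights next to it leave the bound; they pay
for the shortfall, with enough to spare for a side that is a single leaf.
-/

/-- A (full) binary tree: every internal node has exactly two children. -/
inductive BTree where
  | leaf : BTree
  | node : BTree → BTree → BTree

namespace BTree

/-- Depths of the leaves, in left-to-right order. -/
def leafDepths : BTree → List ℕ
  | leaf => [0]
  | node l r => l.leafDepths.map (· + 1) ++ r.leafDepths.map (· + 1)

end BTree

open Real

theorem Real.two_mul_min_mul_log_two_le_binEntropy {p : ℝ} (hp₀ : 0 ≤ p) (hp₁ : p ≤ 1) :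
    2 * min p (1 - p) * log 2 ≤ binEntropy p := by
  wlog hp : p ≤ 2⁻¹ generalizing p
  · simpa [min_comm] using this (p := 1 - p) (by linarith) (by linarith) (by linarith)
  have hchord := strictConcave_binEntropy.concaveOn.2 (by norm_num : (0 : ℝ) ∈ Set.Icc 0 1)
    (by norm_num : (2⁻¹ : ℝ) ∈ Set.Icc 0 1) (by linarith : 0 ≤ 1 - 2 * p)
    (by linarith : 0 ≤ 2 * p) (by ring)
  rw [show (1 - 2 * p) • (0 : ℝ) + (2 * p) • (2⁻¹ : ℝ) = p by simp only [smul_eq_mul]; ring]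
    at hchord
  simpa [min_eq_left (show p ≤ 1 - p by linarith), ← mul_assoc] using hchord

theorem Real.mul_negMulLog_div {S : ℝ} (hS : S ≠ 0) (x : ℝ) :
    S * negMulLog (x / S) = x * (log S - log x) := by
  rw [div_eq_mul_inv, negMulLog_mul, negMulLog, negMulLog, log_inv]
  field_simp
  ring

noncomputable def scaledEntropy (w : List ℝ) : ℝ :=
  (w.map fun x => x * (logb 2 w.sum - logb 2 x)).sum

@[simp] theorem scaledEntropy_singleton (x : ℝ) : scaledEntropy [x] = 0 := by
  simp [scaledEntropy]

theorem scaledEntropy_of_sum_eq_one {w : List ℝ} (h : w.sum = 1) :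
    scaledEntropy w = (w.map fun x => x * logb 2 x⁻¹).sum := by
  simp [scaledEntropy, h, logb_inv]

theorem sum_map_mul_sub_logb (l : List ℝ) (c : ℝ) :
    (l.map fun x => x * (c - logb 2 x)).sum = scaledEntropy l + l.sum * (c - logb 2 l.sum) := by
  have h : (fun x => x * (c - logb 2 x))
      = fun x => x * (logb 2 l.sum - logb 2 x) + x * (c - logb 2 l.sum) := by
    ext x; ring
  rw [h, List.sum_map_add, List.sum_map_mul_right, List.map_id', scaledEntropy]

theorem scaledEntropy_append (u v : List ℝ) :
    scaledEntropy (u ++ v) = scaledEntropy u + scaledEntropy v + scaledEntropy [u.sum, v.sum] := by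
  rw [scaledEntropy, List.map_append, List.sum_append, List.sum_append, sum_map_mul_sub_logb,
    sum_map_mul_sub_logb]
  simp only [scaledEntropy, List.map_cons, List.map_nil, List.sum_cons, List.sum_nil, add_zero]
  ring

theorem scaledEntropy_pair_mul_log_two {a b : ℝ} (h : a + b ≠ 0) :
    scaledEntropy [a, b] * log 2 = (a + b) * binEntropy (a / (a + b)) := by
  have hb : 1 - a / (a + b) = b / (a + b) := by field_simp; ring
  rw [binEntropy_eq_negMulLog_add_negMulLog_one_sub, hb, mul_add, mul_negMulLog_div h,
    mul_negMulLog_div h]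
  simp only [scaledEntropy, List.sum_cons, List.sum_nil, add_zero, List.map_cons, List.map_nil,
    logb]
  field_simp

theorem two_mul_min_le_scaledEntropy_pair {a b : ℝ} (ha : 0 ≤ a) (hb : 0 ≤ b) :
    2 * min a b ≤ scaledEntropy [a, b] := by
  rcases (add_nonneg ha hb).eq_or_lt with hS | hS
  · obtain ⟨rfl, rfl⟩ : a = 0 ∧ b = 0 := ⟨by linarith, by linarith⟩
    simp [scaledEntropy]
  have hb' : 1 - a / (a + b) = b / (a + b) := by field_simp; ring
  calc 2 * min a b = (a + b) * (2 * min (a / (a + b)) (1 - a / (a + b)) * log 2) / log 2 := by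
        rw [hb', min_div_div_right hS.le]; field_simp
    _ ≤ (a + b) * binEntropy (a / (a + b)) / log 2 := by
        gcongr
        exact two_mul_min_mul_log_two_le_binEntropy (div_nonneg ha hS.le)
          (div_le_one_of_le₀ (by linarith) hS.le)
    _ = scaledEntropy [a, b] := by
        rw [← scaledEntropy_pair_mul_log_two hS.ne']; field_simp

theorem List.exists_balanced_split_of_sum_le (w p : List ℝ) (a y : ℝ) (hpa : 0 ≤ p.sum + a)
    (h0 : ∀ x ∈ y :: w, 0 ≤ x) (hp : p.sum ≤ y + w.sum) :
    ∃ L R, ∃ (hL : L ≠ []) (hR : R ≠ []), p ++ a :: y :: w = L ++ R ∧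
      L.sum ≤ R.sum + L.getLast hL ∧ R.sum ≤ L.sum + R.head hR := by
  have hsum : (p ++ [a]).sum = p.sum + a := by rw [sum_append, sum_singleton]
  by_cases h : w.sum ≤ p.sum + a
  · refine ⟨p ++ [a], y :: w, by simp, by simp, by simp, ?_, ?_⟩
    · rw [hsum, getLast_concat, sum_cons]; linarith
    · rw [hsum, head_cons, sum_cons]; linarith
  obtain _ | ⟨z, w⟩ := w
  · exact absurd hpa (by simpa using h)
  rw [sum_cons, not_le] at h
  obtain ⟨L, R, hL, hR, hLR, hbal⟩ := exists_balanced_split_of_sum_le w (p ++ [a]) y z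
    (by rw [hsum]; linarith [h0 y mem_cons_self]) (fun x hx => h0 x (mem_cons_of_mem y hx))
    (by rw [hsum]; linarith)
  exact ⟨L, R, hL, hR, by simpa using hLR, hbal⟩

theorem List.exists_balanced_split {w : List ℝ} (h0 : ∀ x ∈ w, 0 ≤ x) (h2 : 2 ≤ w.length) :
    ∃ L R, ∃ (hL : L ≠ []) (hR : R ≠ []), w = L ++ R ∧
      L.sum ≤ R.sum + L.getLast hL ∧ R.sum ≤ L.sum + R.head hR := by
  obtain _ | ⟨a, _ | ⟨y, w⟩⟩ := w
  · simp at h2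
  · simp at h2
  have h0' : ∀ x ∈ y :: w, 0 ≤ x := fun x hx => h0 x (mem_cons_of_mem a hx)
  exact exists_balanced_split_of_sum_le w [] a y (by simpa using h0 a mem_cons_self) h0'
    (by simpa using sum_nonneg h0')

-- Balance at a cut, with the slack needed by a side `C` that is a single leaf: `x` is the weight
-- of `C` next to the cut and `S` the mass of the other side.
theorem List.ite_length_eq_one_add_sum_le {C : List ℝ} {x S : ℝ} (μ : ℝ) (hx : x ∈ C)
    (hS : μ ≤ S) (hC : C.sum ≤ S + x) :
    (if C.length = 1 then μ else 0) + C.sum ≤ x + S := by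
  split_ifs with h1
  · obtain ⟨y, rfl⟩ := length_eq_one_iff.mp h1
    obtain rfl := mem_singleton.mp hx
    simpa [add_comm] using hS
  · linarith

theorem List.sum_zipWith_mul_map_succ :
    ∀ (w : List ℝ) (ds : List ℕ), w.length = ds.length →
      (zipWith (fun (x : ℝ) (d : ℕ) => x * d) w (ds.map (· + 1))).sum
        = (zipWith (fun (x : ℝ) (d : ℕ) => x * d) w ds).sum + w.sum
  | [], [], _ => by simp
  | x :: w, d :: ds, h => by
    simp only [map_cons, zipWith_cons_cons, sum_cons,
      sum_zipWith_mul_map_succ w ds (by simpa using h)]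
    push_cast
    ring

theorem List.sum_zipWith_ofFn : ∀ {n : ℕ} (α : Fin n → ℝ) (ds : List ℕ),
    (zipWith (fun (x : ℝ) (d : ℕ) => x * d) (ofFn α) ds).sum = ∑ i, α i * (ds.getD i 0 : ℝ)
  | 0, _, _ => by simp
  | _ + 1, _, [] => by simp
  | _ + 1, α, d :: ds => by
    simp [List.ofFn_succ, Fin.sum_univ_succ, List.sum_zipWith_ofFn _ ds]

namespace BTree

def cost (w : List ℝ) (T : BTree) : ℝ :=
  (List.zipWith (fun (x : ℝ) (d : ℕ) => x * d) w T.leafDepths).sum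

@[simp] theorem length_leafDepths_node (l r : BTree) :
    (node l r).leafDepths.length = l.leafDepths.length + r.leafDepths.length := by
  simp [leafDepths]

@[simp] theorem cost_leaf (x : ℝ) : cost [x] leaf = 0 := by
  simp [cost, leafDepths]

theorem cost_node {u v : List ℝ} {l r : BTree} (hl : l.leafDepths.length = u.length)
    (hr : r.leafDepths.length = v.length) :
    cost (u ++ v) (node l r) = cost u l + cost v r + (u ++ v).sum := by
  rw [cost, leafDepths, List.zipWith_append (by simpa using hl.symm), List.sum_append,
    List.sum_zipWith_mul_map_succ _ _ hl.symm, List.sum_zipWith_mul_map_succ _ _ hr.symm,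
    List.sum_append, cost, cost]
  ring

theorem cost_ofFn {n : ℕ} (α : Fin n → ℝ) (T : BTree) :
    cost (List.ofFn α) T = ∑ i, α i * (T.leafDepths.getD i 0 : ℝ) :=
  List.sum_zipWith_ofFn α T.leafDepths

theorem exists_cost_add_ends_le (μ : ℝ) (w : List ℝ) (hne : w ≠ []) (h0 : ∀ x ∈ w, 0 ≤ x)
    (hμ : ∀ x ∈ w, μ ≤ x) :
    ∃ T : BTree, T.leafDepths.length = w.length ∧
      cost w T + w.length * μ + w.head hne + w.getLast hne
        ≤ scaledEntropy w + 2 * w.sum + if w.length = 1 then μ else 0 := by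
  obtain ⟨x, rfl⟩ | h2 : (∃ x, w = [x]) ∨ 2 ≤ w.length := by
    match w, hne with
    | [x], _ => exact .inl ⟨x, rfl⟩
    | _ :: _ :: _, _ => exact .inr (by simp)
  · exact ⟨leaf, rfl, by simp [two_mul, add_comm, add_left_comm]⟩
  obtain ⟨L, R, hL, hR, rfl, hLR, hRL⟩ := List.exists_balanced_split h0 h2
  simp only [List.mem_append, or_imp, forall_and] at h0 hμ
  obtain ⟨l, hl, hcl⟩ := exists_cost_add_ends_le μ L hL h0.1 hμ.1
  obtain ⟨r, hr, hcr⟩ := exists_cost_add_ends_le μ R hR h0.2 hμ.2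
  refine ⟨node l r, by simp [hl, hr], ?_⟩
  have hent := two_mul_min_le_scaledEntropy_pair (List.sum_nonneg h0.1) (List.sum_nonneg h0.2)
  have hμl := hμ.1 _ (L.getLast_mem hL)
  have hμr := hμ.2 _ (R.head_mem hR)
  have hiL := List.ite_length_eq_one_add_sum_le μ (L.getLast_mem hL)
    (hμr.trans (List.single_le_sum h0.2 _ (R.head_mem hR))) hLR
  have hiR := List.ite_length_eq_one_add_sum_le μ (R.head_mem hR)
    (hμl.trans (List.single_le_sum h0.1 _ (L.getLast_mem hL))) hRL
  have hiL' : (if L.length = 1 then μ else 0) ≤ L.getLast hL := by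
    split_ifs; exacts [hμl, h0.1 _ (L.getLast_mem hL)]
  have hiR' : (if R.length = 1 then μ else 0) ≤ R.head hR := by
    split_ifs; exacts [hμr, h0.2 _ (R.head_mem hR)]
  rw [cost_node hl hr, scaledEntropy_append, if_neg (by omega),
    List.head_append_of_ne_nil hL, List.getLast_append_of_ne_nil _ hR]
  simp only [List.sum_append, List.length_append, Nat.cast_add]
  rcases le_total L.sum R.sum with hs | hs
  · rw [min_eq_left hs] at hent
    linarith
  · rw [min_eq_right hs] at hent
    linarith
termination_by w.length
decreasing_by all_goals subst_vars; simp [List.length_pos_iff, *]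

theorem exists_cost_le (μ : ℝ) {w : List ℝ} (h2 : 2 ≤ w.length) (h0 : ∀ x ∈ w, 0 ≤ x)
    (hμ : ∀ x ∈ w, μ ≤ x) :
    ∃ T : BTree, T.leafDepths.length = w.length ∧
      cost w T ≤ scaledEntropy w + 2 * w.sum - (w.length + 2) * μ := by
  have hne : w ≠ [] := List.ne_nil_of_length_pos (by omega)
  obtain ⟨T, hT, hcost⟩ := exists_cost_add_ends_le μ w hne h0 hμ
  rw [if_neg (by omega)] at hcost
  exact ⟨T, hT, by linarith [hμ _ (w.head_mem hne), hμ _ (w.getLast_mem hne)]⟩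

end BTree

theorem nearly_optimal_alphabetic_tree_method1
    (m : ℕ) (hm : 1 ≤ m)
    (α : Fin (m + 1) → ℝ) (hα : ∀ i, 0 ≤ α i)
    (hsum : ∑ i, α i = 1) :
    ∃ T : BTree,
      T.leafDepths.length = m + 1 ∧
      (∑ i : Fin (m + 1), α i * (T.leafDepths.getD i 0 : ℝ))
        ≤ (∑ i, α i * Real.logb 2 (α i)⁻¹) + 2
            - (m + 3) * (Finset.univ.inf' Finset.univ_nonempty α) := by
  set μ := Finset.univ.inf' Finset.univ_nonempty α
  have hμ : ∀ x ∈ List.ofFn α, μ ≤ x :=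
    List.forall_mem_ofFn_iff.mpr fun i => Finset.inf'_le α (Finset.mem_univ i)
  have hsum' : (List.ofFn α).sum = 1 := by rw [List.sum_ofFn, hsum]
  obtain ⟨T, hT, hcost⟩ := BTree.exists_cost_le μ (by rw [List.length_ofFn]; omega)
    (List.forall_mem_ofFn_iff.mpr hα) hμ
  refine ⟨T, by simpa using hT, ?_⟩
  rw [scaledEntropy_of_sum_eq_one hsum', hsum', List.map_ofFn, List.sum_ofFn, List.length_ofFn,
    BTree.cost_ofFn] at hcost
  simp only [Function.comp_apply] at hcost
  push_cast at hcost
  linarith
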